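/- arXiv:1807.06308 — 6 statements merged into one kernel-verified Lean document; each statement's English description precedes it below -/
import Mathlib

section
/- Let E be an n×n complex positive semidefinite matrix with 1 − E also positive semidefinite (i.e., 0 ≤ E ≤ 1). Then there exist n×n complex matrices M_1, …, M_n such that for each i all entries of M_i outside the i-th row are zero, and E + Σ_{i=1}^n M_i† M_i = 1. (Thus any incoherent measurement operator E_0 = E can be completed to a POVM by incoherent measurement operators E_i = M_i† M_i.) -/
open Matrix
open scoped ComplexOrder

/-! Since `1 - E ≥ 0`, write `1 - E = S† S`. Cutting `S` into its rows `Mᵢ = |i⟩⟨i| S`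
gives `Σ Mᵢ† Mᵢ = S† (Σ |i⟩⟨i|) S = S† S = 1 - E`. -/

namespace Matrix

theorem sum_conjTranspose_single_mul_mul_single_mul {m l α : Type*} [Fintype m]
    [DecidableEq m] [Fintype l] [Semiring α] [StarRing α] (S : Matrix m l α) :
    ∑ i, ((single i i 1 : Matrix m m α) * S)ᴴ * ((single i i 1 : Matrix m m α) * S) =
      Sᴴ * S :=
  calc _ = ∑ i, Sᴴ * (single i i 1 : Matrix m m α) * S := by
        refine Finset.sum_congr rfl fun i _ => ?_
        rw [conjTranspose_mul, conjTranspose_single, star_one, Matrix.mul_assoc, Matrix.mul_assoc,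
          ← Matrix.mul_assoc (single i i 1 : Matrix m m α), single_mul_single_same, mul_one]
    _ = Sᴴ * (∑ i, (single i i 1 : Matrix m m α)) * S := by rw [Matrix.mul_sum, Matrix.sum_mul]
    _ = Sᴴ * S := by rw [sum_single_one, Matrix.mul_one]

end Matrix

theorem incoherent_povm_completion_general (n : ℕ) (E : Matrix (Fin n) (Fin n) ℂ)
    (hE1 : (1 - E).PosSemidef) :
    ∃ M : Fin n → Matrix (Fin n) (Fin n) ℂ,
      (∀ i j k, j ≠ i → M i j k = 0) ∧
      E + ∑ i, (M i)ᴴ * (M i) = 1 := by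
  obtain ⟨S, hS⟩ : ∃ S : Matrix (Fin n) (Fin n) ℂ, 1 - E = star S * S := by
    open scoped MatrixOrder in exact CStarAlgebra.nonneg_iff_eq_star_mul_self.mp hE1.nonneg
  refine ⟨fun i => single i i 1 * S, fun i j k hji => single_mul_apply_of_ne _ _ _ _ _ hji S,
    ?_⟩
  rw [sum_conjTranspose_single_mul_mul_single_mul, ← star_eq_conjTranspose, ← hS,
    add_sub_cancel]

/-- Any incoherent POVM element `E` with `0 ≤ E ≤ 1` can be
completed to a POVM by incoherent Kraus operators `M i` each of which is
supported on a single row (so `E + Σ_i (M i)† (M i) = 1`). -/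
theorem incoherent_povm_completion (n : ℕ) (E : Matrix (Fin n) (Fin n) ℂ)
    (hE : E.PosSemidef) (hE1 : (1 - E).PosSemidef) :
    ∃ M : Fin n → Matrix (Fin n) (Fin n) ℂ,
      (∀ i j k, j ≠ i → M i j k = 0) ∧
      E + ∑ i, (M i)ᴴ * (M i) = 1 :=
  incoherent_povm_completion_general n E hE1
end

section
/- Let ψ : {0,1}×{0,1} → ℂ be the coefficient vector of a two-qubit pure state, written ψ = (a,b,c,d) with a = ψ(0,0), b = ψ(0,1), c = ψ(1,0), d = ψ(1,1), all four nonzero. Let A and B be invertible 2×2 complex matrices, each of which is either diagonal (off-diagonal entries zero) or antidiagonal (diagonal entries zero), and let φ = (A ⊗ B)ψ with coefficients (a',b',c',d'). Then a',b',c',d' are all nonzero, and: if A and B are both diagonal or both antidiagonal, then a'd'/(b'c') = ad/(bc); if exactly one of A, B is antidiagonal, then a'd'/(b'c') = bc/(ad). Hence the unordered pair {ad/(bc), bc/(ad)} is invariant under invertible local SIO operators. -/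
/-- A 2×2 matrix is diagonal if its off-diagonal entries vanish. -/
def Diag2 (A : Matrix (Fin 2) (Fin 2) ℂ) : Prop := A 0 1 = 0 ∧ A 1 0 = 0

/-- A 2×2 matrix is antidiagonal if its diagonal entries vanish. -/
def Anti2 (A : Matrix (Fin 2) (Fin 2) ℂ) : Prop := A 0 0 = 0 ∧ A 1 1 = 0

/-- The action of the Kronecker product `A ⊗ B` of local operators on a
two-qubit coefficient vector `ψ`. -/
noncomputable def kron2 (A B : Matrix (Fin 2) (Fin 2) ℂ) (ψ : Fin 2 → Fin 2 → ℂ) :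
    Fin 2 → Fin 2 → ℂ :=
  fun i j => ∑ k, ∑ l, A i k * B j l * ψ k l

/-! An invertible SIO matrix is monomial: row `i` has a single nonzero entry, in column `σ i`,
with `σ = id` (diagonal) or `σ = Fin.rev` (antidiagonal). Hence `A ⊗ B` maps the coefficient
`ψ (σ i) (τ j)` to position `(i, j)` up to a nonzero factor `A i (σ i) * B j (τ j)`. These factors
cancel in the cross ratio `ad / (bc)`, while each `Fin.rev` swaps its numerator and denominator. -/

def IsMonomialWith {n K : Type*} [Zero K] (A : Matrix n n K) (σ : n → n) : Prop :=
  (∀ i k, k ≠ σ i → A i k = 0) ∧ ∀ i, A i (σ i) ≠ 0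

def crossRatio {K : Type*} [Field K] (ψ : Fin 2 → Fin 2 → K) : K :=
  ψ 0 0 * ψ 1 1 / (ψ 0 1 * ψ 1 0)

section CrossRatio

variable {K : Type*} [Field K] (ψ : Fin 2 → Fin 2 → K)

theorem crossRatio_rev_left : crossRatio (fun i j => ψ i.rev j) = (crossRatio ψ)⁻¹ := by
  change ψ 1 0 * ψ 0 1 / (ψ 1 1 * ψ 0 0) = (ψ 0 0 * ψ 1 1 / (ψ 0 1 * ψ 1 0))⁻¹
  rw [inv_div, mul_comm (ψ 1 0), mul_comm (ψ 1 1)]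

theorem crossRatio_rev_right : crossRatio (fun i j => ψ i j.rev) = (crossRatio ψ)⁻¹ := by
  change ψ 0 1 * ψ 1 0 / (ψ 0 0 * ψ 1 1) = (ψ 0 0 * ψ 1 1 / (ψ 0 1 * ψ 1 0))⁻¹
  rw [inv_div]

theorem crossRatio_rev_rev : crossRatio (fun i j => ψ i.rev j.rev) = crossRatio ψ :=
  (crossRatio_rev_left fun i j => ψ i j.rev).trans (by rw [crossRatio_rev_right, inv_inv])

end CrossRatio

variable {A B : Matrix (Fin 2) (Fin 2) ℂ}

theorem Diag2.isMonomialWith_id (hA : IsUnit A) (h : Diag2 A) : IsMonomialWith A id := by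
  have hdet := (A.isUnit_iff_isUnit_det.mp hA).ne_zero
  rw [Matrix.det_fin_two, h.1, h.2, mul_zero, sub_zero] at hdet
  refine ⟨fun i k hk => ?_, fun i => ?_⟩
  · fin_cases i <;> fin_cases k <;> simp_all [Diag2]
  · fin_cases i
    exacts [left_ne_zero_of_mul hdet, right_ne_zero_of_mul hdet]

theorem Anti2.isMonomialWith_rev (hA : IsUnit A) (h : Anti2 A) : IsMonomialWith A Fin.rev := by
  have hdet := (A.isUnit_iff_isUnit_det.mp hA).ne_zero
  rw [Matrix.det_fin_two, h.1, h.2, zero_mul, zero_sub, neg_ne_zero] at hdet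
  refine ⟨fun i k hk => ?_, fun i => ?_⟩
  · fin_cases i <;> fin_cases k <;> simp_all [Anti2]
  · fin_cases i
    exacts [left_ne_zero_of_mul hdet, right_ne_zero_of_mul hdet]

theorem exists_isMonomialWith_of_sio (hA : IsUnit A) (h : Diag2 A ∨ Anti2 A) :
    ∃ σ, IsMonomialWith A σ :=
  h.elim (fun hd => ⟨id, hd.isMonomialWith_id hA⟩) fun ha => ⟨Fin.rev, ha.isMonomialWith_rev hA⟩

section Kron2

variable {σ τ : Fin 2 → Fin 2} (hA : IsMonomialWith A σ) (hB : IsMonomialWith B τ)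
  (ψ : Fin 2 → Fin 2 → ℂ)
include hA hB

theorem kron2_apply_of_isMonomialWith (i j : Fin 2) :
    kron2 A B ψ i j = A i (σ i) * B j (τ j) * ψ (σ i) (τ j) := by
  rw [kron2, Finset.sum_eq_single (σ i), Finset.sum_eq_single (τ j)]
  · exact fun l _ hl => by rw [hB.1 j l hl, mul_zero, zero_mul]
  · simp
  · exact fun k _ hk => Finset.sum_eq_zero fun l _ => by rw [hA.1 i k hk, zero_mul, zero_mul]
  · simp

theorem kron2_apply_ne_zero (hψ : ∀ i j, ψ i j ≠ 0) (i j : Fin 2) : kron2 A B ψ i j ≠ 0 := by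
  rw [kron2_apply_of_isMonomialWith hA hB]
  exact mul_ne_zero (mul_ne_zero (hA.2 i) (hB.2 j)) (hψ _ _)

theorem crossRatio_kron2 :
    crossRatio (kron2 A B ψ) = crossRatio fun i j => ψ (σ i) (τ j) := by
  simp only [crossRatio, kron2_apply_of_isMonomialWith hA hB]
  have hc : A 0 (σ 0) * A 1 (σ 1) * B 0 (τ 0) * B 1 (τ 1) ≠ 0 :=
    mul_ne_zero (mul_ne_zero (mul_ne_zero (hA.2 0) (hA.2 1)) (hB.2 0)) (hB.2 1)
  rw [← mul_div_mul_left (ψ (σ 0) (τ 0) * ψ (σ 1) (τ 1)) (ψ (σ 0) (τ 1) * ψ (σ 1) (τ 0)) hc]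
  congr 1 <;> ring

end Kron2

/-- local invertible SIO operators (diagonal or antidiagonal
invertible matrices) preserve the nonvanishing of the four product terms of a
two-qubit pure state, and the ratio `ad/(bc)` is preserved when both local
operators have the same type and inverted when they have different types. -/
theorem sio_preserves_ratio (A B : Matrix (Fin 2) (Fin 2) ℂ)
    (hA : IsUnit A) (hB : IsUnit B)
    (hAtype : Diag2 A ∨ Anti2 A) (hBtype : Diag2 B ∨ Anti2 B)
    (ψ : Fin 2 → Fin 2 → ℂ) (hψ : ∀ i j, ψ i j ≠ 0) :
    (∀ i j, kron2 A B ψ i j ≠ 0) ∧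
    (((Diag2 A ∧ Diag2 B) ∨ (Anti2 A ∧ Anti2 B)) →
      kron2 A B ψ 0 0 * kron2 A B ψ 1 1 / (kron2 A B ψ 0 1 * kron2 A B ψ 1 0) =
        ψ 0 0 * ψ 1 1 / (ψ 0 1 * ψ 1 0)) ∧
    (((Diag2 A ∧ Anti2 B) ∨ (Anti2 A ∧ Diag2 B)) →
      kron2 A B ψ 0 0 * kron2 A B ψ 1 1 / (kron2 A B ψ 0 1 * kron2 A B ψ 1 0) =
        ψ 0 1 * ψ 1 0 / (ψ 0 0 * ψ 1 1)) := by
  obtain ⟨σ, hσ⟩ := exists_isMonomialWith_of_sio hA hAtype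
  obtain ⟨τ, hτ⟩ := exists_isMonomialWith_of_sio hB hBtype
  refine ⟨kron2_apply_ne_zero hσ hτ ψ hψ, ?_, ?_⟩
  · change _ → crossRatio (kron2 A B ψ) = crossRatio ψ
    rintro (⟨hAd, hBd⟩ | ⟨hAa, hBa⟩)
    · exact crossRatio_kron2 (hAd.isMonomialWith_id hA) (hBd.isMonomialWith_id hB) ψ
    · exact (crossRatio_kron2 (hAa.isMonomialWith_rev hA) (hBa.isMonomialWith_rev hB) ψ).trans
        (crossRatio_rev_rev ψ)
  · intro htype
    rw [← inv_div (ψ 0 0 * ψ 1 1)]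
    rcases htype with ⟨hAd, hBa⟩ | ⟨hAa, hBd⟩
    · exact (crossRatio_kron2 (hAd.isMonomialWith_id hA) (hBa.isMonomialWith_rev hB) ψ).trans
        (crossRatio_rev_right ψ)
    · exact (crossRatio_kron2 (hAa.isMonomialWith_rev hA) (hBd.isMonomialWith_id hB) ψ).trans
        (crossRatio_rev_left ψ)
end

section
/- Let a,b,c,d be nonzero complex numbers, set r = (a·d)/(b·c), α = 1/√(3 + |r|²) and β = r·α. Then α is a positive real number, 0 < |β| < 1, 3α² + |β|² = 1, and there exist invertible diagonal 2×2 complex matrices A and B such that (A ⊗ B) applied to the two-qubit coefficient vector (a,b,c,d) (with a at position (0,0), b at (0,1), c at (1,0), d at (1,1)) equals the vector (α, α, α, β). Hence any two-qubit pure state with four nonzero product terms is SLICC equivalent to a normalized state of the form α(|00⟩+|01⟩+|10⟩) + β|11⟩. -/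
open Matrix

theorem diag2_diagonal (p : Fin 2 → ℂ) : Diag2 (diagonal p) :=
  ⟨diagonal_apply_ne _ (by decide), diagonal_apply_ne _ (by decide)⟩

theorem kron2_diagonal (p q : Fin 2 → ℂ) (ψ : Fin 2 → Fin 2 → ℂ) (i j : Fin 2) :
    kron2 (diagonal p) (diagonal q) ψ i j = p i * q j * ψ i j := by
  simp [kron2, diagonal_apply, ite_mul, mul_ite]

theorem isUnit_diagonal_fin_two {K : Type*} [Field K] {x y : K} (hx : x ≠ 0) (hy : y ≠ 0) :
    IsUnit (diagonal ![x, y]) := by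
  rw [isUnit_diagonal, Pi.isUnit_iff]
  intro i
  fin_cases i
  exacts [hx.isUnit, hy.isUnit]

section Rescaling

variable {a b c d : ℂ} (γ : ℂ)

theorem kron2_rescale_zero_zero (ha : a ≠ 0) :
    kron2 (diagonal ![1, a / c]) (diagonal ![γ / a, γ / b])
      (fun k l => !![a, b; c, d] k l) 0 0 = γ := by
  simp [kron2_diagonal, ha]

theorem kron2_rescale_zero_one (hb : b ≠ 0) :
    kron2 (diagonal ![1, a / c]) (diagonal ![γ / a, γ / b])
      (fun k l => !![a, b; c, d] k l) 0 1 = γ := by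
  simp [kron2_diagonal, hb]

theorem kron2_rescale_one_zero (ha : a ≠ 0) (hc : c ≠ 0) :
    kron2 (diagonal ![1, a / c]) (diagonal ![γ / a, γ / b])
      (fun k l => !![a, b; c, d] k l) 1 0 = γ := by
  simp only [kron2_diagonal, of_apply, cons_val', cons_val_fin_one, cons_val_one, cons_val_zero]
  field_simp

theorem kron2_rescale_one_one :
    kron2 (diagonal ![1, a / c]) (diagonal ![γ / a, γ / b])
      (fun k l => !![a, b; c, d] k l) 1 1 = a * d / (b * c) * γ := by
  simp only [kron2_diagonal, of_apply, cons_val', cons_val_fin_one, cons_val_one]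
  ring

end Rescaling

theorem three_mul_sq_add_sq_eq_one (x : ℝ) :
    3 * (1 / √(3 + x ^ 2)) ^ 2 + (x * (1 / √(3 + x ^ 2))) ^ 2 = 1 := by
  have hpos : 0 < 3 + x ^ 2 := by positivity
  rw [mul_pow, div_pow, one_pow, Real.sq_sqrt hpos.le]
  field_simp

/-- any two-qubit pure state `a|00⟩+b|01⟩+c|10⟩+d|11⟩` with all
four product terms nonzero is SLICC equivalent, via invertible diagonal local
operators, to the normalized state `α(|00⟩+|01⟩+|10⟩)+β|11⟩` where
`β/α = r = ad/(bc)`. -/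
theorem slicc_normal_form (a b c d : ℂ)
    (ha : a ≠ 0) (hb : b ≠ 0) (hc : c ≠ 0) (hd : d ≠ 0) :
    let r : ℂ := a * d / (b * c)
    let α : ℝ := 1 / Real.sqrt (3 + ‖r‖ ^ 2)
    let β : ℂ := r * (α : ℂ)
    0 < α ∧ 0 < ‖β‖ ∧ ‖β‖ < 1 ∧
    3 * α ^ 2 + ‖β‖ ^ 2 = 1 ∧
    ∃ A B : Matrix (Fin 2) (Fin 2) ℂ, IsUnit A ∧ IsUnit B ∧
      Diag2 A ∧ Diag2 B ∧
      kron2 A B (fun k l => !![a, b; c, d] k l) 0 0 = (α : ℂ) ∧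
      kron2 A B (fun k l => !![a, b; c, d] k l) 0 1 = (α : ℂ) ∧
      kron2 A B (fun k l => !![a, b; c, d] k l) 1 0 = (α : ℂ) ∧
      kron2 A B (fun k l => !![a, b; c, d] k l) 1 1 = β := by
  intro r α β
  have hr : r ≠ 0 := div_ne_zero (mul_ne_zero ha hd) (mul_ne_zero hb hc)
  have hα : 0 < α := by positivity
  have hαC : (α : ℂ) ≠ 0 := Complex.ofReal_ne_zero.mpr hα.ne'
  have hβ : ‖β‖ = ‖r‖ * α := by
    rw [norm_mul, Complex.norm_real, Real.norm_of_nonneg hα.le]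
  have hnorm : 3 * α ^ 2 + ‖β‖ ^ 2 = 1 := hβ ▸ three_mul_sq_add_sq_eq_one ‖r‖
  have hβ_pos : 0 < ‖β‖ := hβ ▸ mul_pos (norm_pos_iff.mpr hr) hα
  have hβ_lt : ‖β‖ < 1 := by nlinarith
  refine ⟨hα, hβ_pos, hβ_lt, hnorm,
    diagonal ![1, a / c], diagonal ![(α : ℂ) / a, (α : ℂ) / b],
    isUnit_diagonal_fin_two one_ne_zero (div_ne_zero ha hc),
    isUnit_diagonal_fin_two (div_ne_zero hαC ha) (div_ne_zero hαC hb),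
    diag2_diagonal _, diag2_diagonal _, kron2_rescale_zero_zero _ ha,
    kron2_rescale_zero_one _ hb, kron2_rescale_one_zero _ ha hc, kron2_rescale_one_one _⟩
end

section
/- Let a, b, a', d' be nonzero complex numbers. Let ψ : {0,1}×{0,1} → ℂ be the vector with ψ(0,0) = a, ψ(0,1) = b and ψ(1,0) = ψ(1,1) = 0, and let φ be the vector with φ(0,0) = a', φ(1,1) = d' and φ(0,1) = φ(1,0) = 0. Then: (i) there are no invertible 2×2 complex matrices A, B, each with at most one nonzero entry per column, such that φ = (A⊗B)ψ; (ii) the same nonexistence holds with ψ replaced by the vector supported on {(0,0),(1,0)} with nonzero values; and (iii) it also holds between a vector supported on {(0,0),(0,1)} and one supported on {(0,0),(1,0)} (both with nonzero values). Hence the three classes a|00⟩+b|01⟩, a|00⟩+c|10⟩ and a|00⟩+d|11⟩ of two-qubit states with two nonzero product terms are pairwise SLICC inequivalent. -/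
/-- A complex matrix is an incoherent Kraus operator if each of its columns
contains at most one nonzero entry. -/
def IncoherentKraus {m n : Type*} (F : Matrix m n ℂ) : Prop :=
  ∀ (j : n) (i i' : m), F i j ≠ 0 → F i' j ≠ 0 → i = i'

/-!
Read the coefficients `ψ k l` of a two-qubit state as a matrix `Ψ`; then `A ⊗ B` acts as
`Ψ ↦ A Ψ Bᵀ`. Hence `det` is multiplied by `det A * det B`, so a product state (`det Ψ = 0`)
can never be mapped onto the entangled state `a'|00⟩ + d'|11⟩`. A state `|0⟩ ⊗ v` is mapped to
`A|0⟩ ⊗ Bv`, and for this to equal `(a₂|0⟩ + c₂|1⟩) ⊗ |0⟩` the first column of `A` would need two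
nonzero entries, which incoherence forbids.
-/

open scoped Matrix

theorem kron2_eq_mul_mul_transpose (A B : Matrix (Fin 2) (Fin 2) ℂ) (ψ : Fin 2 → Fin 2 → ℂ) :
    Matrix.of (kron2 A B ψ) = A * Matrix.of ψ * Bᵀ := by
  ext i j
  simp only [kron2, Matrix.of_apply, Matrix.mul_apply, Matrix.transpose_apply,
    Finset.sum_mul]
  rw [Finset.sum_comm]
  exact Finset.sum_congr rfl fun _ _ => Finset.sum_congr rfl fun _ _ => by ring

theorem det_eq_zero_of_eq_kron2 {Φ A B : Matrix (Fin 2) (Fin 2) ℂ} {ψ : Fin 2 → Fin 2 → ℂ}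
    (h : ∀ i j, Φ i j = kron2 A B ψ i j) (hψ : (Matrix.of ψ).det = 0) : Φ.det = 0 := by
  have hΦ : Φ = A * Matrix.of ψ * Bᵀ := by
    rw [← kron2_eq_mul_mul_transpose]
    ext i j
    exact h i j
  rw [hΦ, Matrix.det_mul, Matrix.det_mul, hψ, mul_zero, zero_mul]

theorem IncoherentKraus.eq_of_mul_apply_ne_zero {m n p : Type*} [Fintype n]
    {A : Matrix m n ℂ} (hA : IncoherentKraus A) {M : Matrix n p ℂ} {k₀ : n}
    (hM : ∀ k ≠ k₀, M k = 0) {i i' : m} {j j' : p}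
    (h : (A * M) i j ≠ 0) (h' : (A * M) i' j' ≠ 0) : i = i' := by
  have mul_apply_eq : ∀ i j, (A * M) i j = A i k₀ * M k₀ j := fun i j =>
    Finset.sum_eq_single k₀ (fun k _ hk => by simp [hM k hk]) (by simp)
  rw [mul_apply_eq] at h h'
  exact hA k₀ i i' (left_ne_zero_of_mul h) (left_ne_zero_of_mul h')

theorem two_term_classes_inequivalent_general (a b a' d' : ℂ)
    (ha' : a' ≠ 0) (hd' : d' ≠ 0) :
    (¬ ∃ A B : Matrix (Fin 2) (Fin 2) ℂ, IsUnit A ∧ IsUnit B ∧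
        IncoherentKraus A ∧ IncoherentKraus B ∧
        (∀ i j, (!![a', 0; 0, d'] : Matrix (Fin 2) (Fin 2) ℂ) i j =
          kron2 A B (fun k l => !![a, b; 0, 0] k l) i j)) ∧
    (∀ a₂ c₂ : ℂ, a₂ ≠ 0 → c₂ ≠ 0 →
      ¬ ∃ A B : Matrix (Fin 2) (Fin 2) ℂ, IsUnit A ∧ IsUnit B ∧
          IncoherentKraus A ∧ IncoherentKraus B ∧
          (∀ i j, (!![a', 0; 0, d'] : Matrix (Fin 2) (Fin 2) ℂ) i j =
            kron2 A B (fun k l => !![a₂, 0; c₂, 0] k l) i j)) ∧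
    (∀ a₁ b₁ a₂ c₂ : ℂ, a₁ ≠ 0 → b₁ ≠ 0 → a₂ ≠ 0 → c₂ ≠ 0 →
      ¬ ∃ A B : Matrix (Fin 2) (Fin 2) ℂ, IsUnit A ∧ IsUnit B ∧
          IncoherentKraus A ∧ IncoherentKraus B ∧
          (∀ i j, (!![a₂, 0; c₂, 0] : Matrix (Fin 2) (Fin 2) ℂ) i j =
            kron2 A B (fun k l => !![a₁, b₁; 0, 0] k l) i j)) := by
  have hφ : (!![a', 0; 0, d'] : Matrix (Fin 2) (Fin 2) ℂ).det ≠ 0 := by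
    simp [Matrix.det_fin_two, ha', hd']
  refine ⟨?_, ?_, ?_⟩
  · rintro ⟨A, B, -, -, -, -, h⟩
    exact hφ (det_eq_zero_of_eq_kron2 h (by simp [Matrix.det_fin_two]))
  · rintro a₂ c₂ - - ⟨A, B, -, -, -, -, h⟩
    exact hφ (det_eq_zero_of_eq_kron2 h (by simp [Matrix.det_fin_two]))
  · rintro a₁ b₁ a₂ c₂ - - ha₂ hc₂ ⟨A, B, -, -, hA, -, h⟩
    have hΦ := kron2_eq_mul_mul_transpose A B fun k l => !![a₁, b₁; 0, 0] k l
    rw [Matrix.mul_assoc] at hΦ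
    set N := (Matrix.of fun k l => !![a₁, b₁; 0, 0] k l) * Bᵀ with hN
    have hN_row : ∀ k ≠ 0, N k = 0 := by
      intro k hk
      obtain rfl : k = 1 := Fin.eq_one_of_ne_zero k hk
      ext l
      simp [hN, Matrix.mul_apply]
    have h00 : (A * N) 0 0 ≠ 0 := by rwa [← hΦ, Matrix.of_apply, ← h]
    have h10 : (A * N) 1 0 ≠ 0 := by rwa [← hΦ, Matrix.of_apply, ← h]
    exact zero_ne_one (hA.eq_of_mul_apply_ne_zero hN_row h00 h10)

/-- the three classes `a|00⟩+b|01⟩`, `a|00⟩+c|10⟩` and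
`a|00⟩+d|11⟩` of two-qubit states with two nonzero product terms are pairwise
SLICC inequivalent. -/
theorem two_term_classes_inequivalent (a b a' d' : ℂ)
    (ha : a ≠ 0) (hb : b ≠ 0) (ha' : a' ≠ 0) (hd' : d' ≠ 0) :
    (¬ ∃ A B : Matrix (Fin 2) (Fin 2) ℂ, IsUnit A ∧ IsUnit B ∧
        IncoherentKraus A ∧ IncoherentKraus B ∧
        (∀ i j, (!![a', 0; 0, d'] : Matrix (Fin 2) (Fin 2) ℂ) i j =
          kron2 A B (fun k l => !![a, b; 0, 0] k l) i j)) ∧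
    (∀ a₂ c₂ : ℂ, a₂ ≠ 0 → c₂ ≠ 0 →
      ¬ ∃ A B : Matrix (Fin 2) (Fin 2) ℂ, IsUnit A ∧ IsUnit B ∧
          IncoherentKraus A ∧ IncoherentKraus B ∧
          (∀ i j, (!![a', 0; 0, d'] : Matrix (Fin 2) (Fin 2) ℂ) i j =
            kron2 A B (fun k l => !![a₂, 0; c₂, 0] k l) i j)) ∧
    (∀ a₁ b₁ a₂ c₂ : ℂ, a₁ ≠ 0 → b₁ ≠ 0 → a₂ ≠ 0 → c₂ ≠ 0 →
      ¬ ∃ A B : Matrix (Fin 2) (Fin 2) ℂ, IsUnit A ∧ IsUnit B ∧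
          IncoherentKraus A ∧ IncoherentKraus B ∧
          (∀ i j, (!![a₂, 0; c₂, 0] : Matrix (Fin 2) (Fin 2) ℂ) i j =
            kron2 A B (fun k l => !![a₁, b₁; 0, 0] k l) i j)) :=
  two_term_classes_inequivalent_general a b a' d' ha' hd'
end

section
/- Let t and z be real numbers with 0 < t and 0 ≤ z < 1. Then the 2-dimensional Lebesgue measure of the set {(s,u) ∈ ℝ² : s² ≤ t² and (1−z²)·s²/t² + u² ≤ 1} equals (2t/√(1−z²))·arcsin(√(1−z²)) + 2zt. (This is the accessible volume V_a of a single-qubit state with Bloch vector components satisfying r_x² + r_y² = t² and |r_z| = z under SIO and IC operations, the set being the region of Bloch-plane points (s,u) reachable from (t,z) according to the transformation conditions s_x²+s_y² ≤ r_x²+r_y² and ((1−r_z²)/(r_x²+r_y²))(s_x²+s_y²) + s_z² ≤ 1.) -/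
/-!
Write `k = √(1 - z²)`. Over each `s` with `|s| ≤ t` the region is the segment
`|u| ≤ √(1 - (k s / t)²)`, so by Fubini its area is `∫_{-t}^{t} 2 √(1 - (k s / t)²) ds`.
The substitution `y = k s / t` turns this into `(t / k) ∫_{-k}^{k} 2 √(1 - y²) dy`, and
`arcsin y + y √(1 - y²)` is an antiderivative of `2 √(1 - y²)`; at `y = k` its second term
is `k z`.
-/

open MeasureTheory Set Real

section RegionBetween

variable {α : Type*} [MeasurableSpace α] {μ : Measure α} {f g : α → ℝ} {s : Set α}

theorem volume_region_between_cc_eq_lintegral (hf : Measurable f) (hg : Measurable g)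
    (hs : MeasurableSet s) :
    μ.prod volume {p : α × ℝ | p.1 ∈ s ∧ p.2 ∈ Icc (f p.1) (g p.1)} =
      ∫⁻ x in s, ENNReal.ofReal (g x - f x) ∂μ := by
  rw [Measure.prod_apply (measurableSet_region_between_cc hf hg hs), ← lintegral_indicator hs]
  congr 1 with x
  by_cases hx : x ∈ s
  · rw [indicator_of_mem hx, ← Real.volume_Icc]
    congr 1 with y
    simp [hx]
  · simp [hx]

theorem volume_region_between_cc_eq_integral (hf : Measurable f) (hg : Measurable g)
    (f_int : IntegrableOn f s μ) (g_int : IntegrableOn g s μ) (hs : MeasurableSet s)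
    (hfg : ∀ x ∈ s, f x ≤ g x) :
    μ.prod volume {p : α × ℝ | p.1 ∈ s ∧ p.2 ∈ Icc (f p.1) (g p.1)} =
      ENNReal.ofReal (∫ x in s, g x - f x ∂μ) := by
  rw [volume_region_between_cc_eq_lintegral hf hg hs]
  exact (ofReal_integral_eq_lintegral_ofReal (g_int.sub f_int)
    ((ae_restrict_iff' hs).mpr (ae_of_all _ fun x hx => sub_nonneg.2 (hfg x hx)))).symm

end RegionBetween

theorem hasDerivAt_arcsin_add_mul_sqrt_one_sub_sq {x : ℝ} (hx : x ∈ Ioo (-1 : ℝ) 1) :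
    HasDerivAt (fun y => arcsin y + y * √(1 - y ^ 2)) (2 * √(1 - x ^ 2)) x := by
  obtain ⟨hx₁, hx₂⟩ := hx
  have hpos : 0 < 1 - x ^ 2 := by nlinarith
  have hinner : HasDerivAt (fun y => 1 - y ^ 2) (-(2 * x)) x := by
    simpa using (hasDerivAt_pow 2 x).const_sub 1
  refine ((hasDerivAt_arcsin hx₁.ne' hx₂.ne).add
    ((hasDerivAt_id' x).mul (hinner.sqrt hpos.ne'))).congr_deriv ?_
  have hsq : √(1 - x ^ 2) ^ 2 = 1 - x ^ 2 := sq_sqrt hpos.le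
  field_simp
  linear_combination -hsq

theorem integral_two_mul_sqrt_one_sub_sq {a b : ℝ} (ha : -1 ≤ a) (hab : a ≤ b) (hb : b ≤ 1) :
    ∫ x in a..b, 2 * √(1 - x ^ 2) =
      (arcsin b + b * √(1 - b ^ 2)) - (arcsin a + a * √(1 - a ^ 2)) :=
  intervalIntegral.integral_eq_sub_of_hasDerivAt_of_le hab (by fun_prop)
    (fun x hx => hasDerivAt_arcsin_add_mul_sqrt_one_sub_sq
      ⟨ha.trans_lt hx.1, hx.2.trans_le hb⟩)
    ((by fun_prop : Continuous fun x : ℝ => 2 * √(1 - x ^ 2)).intervalIntegrable _ _)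

theorem integral_two_mul_sqrt_one_sub_sq_div_mul {t k : ℝ} (ht : t ≠ 0) (hk₀ : 0 < k)
    (hk₁ : k ≤ 1) :
    ∫ x in -t..t, 2 * √(1 - (k / t * x) ^ 2) = 2 * t / k * (arcsin k + k * √(1 - k ^ 2)) := by
  set I := ∫ x in -t..t, 2 * √(1 - (k / t * x) ^ 2)
  have hsub : k / t * I = ∫ y in k / t * -t..k / t * t, 2 * √(1 - y ^ 2) :=
    intervalIntegral.smul_integral_comp_mul_left (fun y => 2 * √(1 - y ^ 2)) (k / t)
  rw [show k / t * -t = -k by field_simp, show k / t * t = k by field_simp,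
    integral_two_mul_sqrt_one_sub_sq (by linarith) (by linarith) hk₁, arcsin_neg, neg_sq] at hsub
  field_simp at hsub ⊢
  linear_combination hsub

theorem volume_truncated_ellipse {t k : ℝ} (ht : 0 < t) (hk₀ : 0 < k) (hk₁ : k ≤ 1) :
    volume {p : ℝ × ℝ | p.1 ^ 2 ≤ t ^ 2 ∧ k ^ 2 * p.1 ^ 2 / t ^ 2 + p.2 ^ 2 ≤ 1} =
      ENNReal.ofReal (2 * t / k * (arcsin k + k * √(1 - k ^ 2))) := by
  set h : ℝ → ℝ := fun x => √(1 - (k / t * x) ^ 2)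
  have hset : {p : ℝ × ℝ | p.1 ^ 2 ≤ t ^ 2 ∧ k ^ 2 * p.1 ^ 2 / t ^ 2 + p.2 ^ 2 ≤ 1} =
      {p : ℝ × ℝ | p.1 ∈ Icc (-t) t ∧ p.2 ∈ Icc (-h p.1) (h p.1)} := by
    ext ⟨x, u⟩
    simp only [mem_ofPred_eq, mem_Icc, ← abs_le, h]
    rw [← sq_le_sq₀ (abs_nonneg x) ht.le, sq_abs]
    refine and_congr_right fun hx => ?_
    have hkx : (k / t * x) ^ 2 = k ^ 2 * x ^ 2 / t ^ 2 := by ring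
    have hkx₁ : k ^ 2 * x ^ 2 / t ^ 2 ≤ 1 := by
      rw [div_le_one (by positivity)]
      nlinarith [pow_le_one₀ hk₀.le hk₁ (n := 2), sq_nonneg x]
    rw [le_sqrt (abs_nonneg u) (by linarith), sq_abs, hkx]
    constructor <;> intro <;> linarith
  have hcont : Continuous h := by fun_prop
  have hslices := volume_region_between_cc_eq_integral (μ := volume) (f := fun x => -h x)
    (g := h) (s := Icc (-t) t) hcont.measurable.neg hcont.measurable hcont.neg.integrableOn_Icc hcont.integrableOn_Icc
    measurableSet_Icc fun x _ => neg_le_self (sqrt_nonneg _)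
  rw [hset, Measure.volume_eq_prod, hslices, integral_Icc_eq_integral_Ioc,
    ← intervalIntegral.integral_of_le (by linarith),
    ← integral_two_mul_sqrt_one_sub_sq_div_mul ht.ne' hk₀ hk₁]
  simp only [h, sub_neg_eq_add, ← two_mul]

/-- the accessible volume under SIO/IC of a single-qubit state
with Bloch components `r_x²+r_y² = t²`, `|r_z| = z` is the area of the planar
region `{(s,u) : s² ≤ t², (1−z²)s²/t² + u² ≤ 1}`, namely
`(2t/√(1−z²))·arcsin(√(1−z²)) + 2zt`. -/
theorem qubit_accessible_volume_sio (t z : ℝ)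
    (ht : 0 < t) (hz0 : 0 ≤ z) (hz1 : z < 1) :
    volume {p : ℝ × ℝ |
        p.1 ^ 2 ≤ t ^ 2 ∧ (1 - z ^ 2) * p.1 ^ 2 / t ^ 2 + p.2 ^ 2 ≤ 1} =
      ENNReal.ofReal
        (2 * t / Real.sqrt (1 - z ^ 2) * Real.arcsin (Real.sqrt (1 - z ^ 2)) +
          2 * z * t) := by
  have hz : 0 < 1 - z ^ 2 := by nlinarith
  have hk₀ : 0 < √(1 - z ^ 2) := sqrt_pos.2 hz
  have hk₁ : √(1 - z ^ 2) ≤ 1 := sqrt_le_one.2 (by nlinarith)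
  have hk_sq : √(1 - z ^ 2) ^ 2 = 1 - z ^ 2 := sq_sqrt hz.le
  have hz_eq : √(1 - √(1 - z ^ 2) ^ 2) = z := by rw [hk_sq, sub_sub_cancel, sqrt_sq hz0]
  have hvol := volume_truncated_ellipse ht hk₀ hk₁
  rw [hz_eq, hk_sq] at hvol
  rw [hvol]
  congr 1
  field_simp
end

section
/- Let t and z be real numbers with t, z ≥ 0 and t² + z² ≤ 1 (and z < 1). Then (2t/√(1−z²))·arcsin(√(1−z²)) + 2zt ≤ π, with equality if and only if z = 0 and t = 1. (Hence the supremum of the single-qubit accessible volume under SIO/IC over the Bloch ball is V_a^{sup} = π, attained by the maximally coherent pure states on the equator, and the accessible coherence is C_a(ρ) = (2/π)(√((r_x²+r_y²)/(1−r_z²))·arcsin√(1−r_z²) + |r_z|√(r_x²+r_y²)).) -/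
/-!
Put `a = arcsin z` and `s = √(1 - z²)`. For `z ≥ 0` one has `arcsin s = arccos z = π/2 - a`,
so the volume is `2 (t/s) arccos z + 2 z t`, and writing `π = 2 arccos z + 2 arcsin z` gives
`π - V = 2 (1 - t/s) arccos z + 2 (arcsin z - z t)`.
Both terms are nonnegative on the Bloch ball (`t ≤ s` and `z t ≤ z ≤ arcsin z`), and the second
vanishes only for `z = 0` because `z < arcsin z` when `0 < z`; then the first forces `t = 1`.
-/

open Real

namespace Real

theorem self_le_arcsin {x : ℝ} (h₀ : 0 ≤ x) (h₁ : x ≤ 1) : x ≤ arcsin x := by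
  simpa only [sin_arcsin (by linarith) h₁] using sin_le (arcsin_nonneg.mpr h₀)

theorem self_lt_arcsin {x : ℝ} (h₀ : 0 < x) (h₁ : x ≤ 1) : x < arcsin x := by
  simpa only [sin_arcsin (by linarith) h₁] using sin_lt (arcsin_pos.mpr h₀)

theorem arcsin_sqrt_one_sub_sq {x : ℝ} (hx : 0 ≤ x) : arcsin √(1 - x ^ 2) = π / 2 - arcsin x := by
  rw [← arccos_eq_arcsin hx, arccos_eq_pi_div_two_sub_arcsin]

end Real

/-- The area of Bloch-plane points reachable under SIO/IC from `(t, z)`. -/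
noncomputable def qubitAccessibleVolume (t z : ℝ) : ℝ :=
  2 * t / √(1 - z ^ 2) * arcsin √(1 - z ^ 2) + 2 * z * t

theorem pi_sub_qubitAccessibleVolume (t : ℝ) {z : ℝ} (hz : 0 ≤ z) :
    π - qubitAccessibleVolume t z =
      2 * (1 - t / √(1 - z ^ 2)) * arccos z + 2 * (arcsin z - z * t) := by
  rw [qubitAccessibleVolume, arcsin_sqrt_one_sub_sq hz, arccos_eq_pi_div_two_sub_arcsin]
  ring

theorem div_sqrt_one_sub_sq_le_one {t z : ℝ} (hball : t ^ 2 + z ^ 2 ≤ 1) :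
    t / √(1 - z ^ 2) ≤ 1 :=
  div_le_one_of_le₀ (le_sqrt_of_sq_le (by linarith)) (sqrt_nonneg _)

theorem mul_le_arcsin {t z : ℝ} (hz₀ : 0 ≤ z) (hz₁ : z ≤ 1) (ht : t ≤ 1) : z * t ≤ arcsin z :=
  (mul_le_of_le_one_right hz₀ ht).trans (self_le_arcsin hz₀ hz₁)

theorem eq_zero_of_arcsin_eq_mul {t z : ℝ} (hz₀ : 0 ≤ z) (hz₁ : z ≤ 1) (ht : t ≤ 1)
    (h : arcsin z = z * t) : z = 0 := by
  by_contra hne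
  have hlt := self_lt_arcsin (lt_of_le_of_ne hz₀ (Ne.symm hne)) hz₁
  linarith [mul_le_of_le_one_right hz₀ ht]

theorem qubit_accessible_volume_sup_general (t z : ℝ)
    (hz0 : 0 ≤ z) (hball : t ^ 2 + z ^ 2 ≤ 1) :
    2 * t / Real.sqrt (1 - z ^ 2) * Real.arcsin (Real.sqrt (1 - z ^ 2)) +
        2 * z * t ≤ Real.pi ∧
    (2 * t / Real.sqrt (1 - z ^ 2) * Real.arcsin (Real.sqrt (1 - z ^ 2)) +
        2 * z * t = Real.pi ↔ z = 0 ∧ t = 1) := by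
  change qubitAccessibleVolume t z ≤ π ∧ (qubitAccessibleVolume t z = π ↔ z = 0 ∧ t = 1)
  have ht₁ : t ≤ 1 := by nlinarith
  have hz₁ : z ≤ 1 := by nlinarith
  have hdeficit := pi_sub_qubitAccessibleVolume t hz0
  have hfirst : 0 ≤ 2 * (1 - t / √(1 - z ^ 2)) * arccos z :=
    mul_nonneg (by linarith [div_sqrt_one_sub_sq_le_one hball]) (arccos_nonneg z)
  have hsecond : 0 ≤ 2 * (arcsin z - z * t) := by linarith [mul_le_arcsin hz0 hz₁ ht₁]
  refine ⟨by linarith, fun heq ↦ ?_, ?_⟩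
  · obtain ⟨hfirst0, hsecond0⟩ := (add_eq_zero_iff_of_nonneg hfirst hsecond).mp (by linarith)
    obtain rfl := eq_zero_of_arcsin_eq_mul hz0 hz₁ ht₁ (by linarith)
    norm_num [arccos_zero, pi_ne_zero] at hfirst0
    exact ⟨rfl, by linarith⟩
  · rintro ⟨rfl, rfl⟩
    norm_num [qubitAccessibleVolume]
    ring

/-- over the Bloch ball (`t, z ≥ 0`, `t² + z² ≤ 1`, `z < 1`),
the single-qubit accessible volume under SIO/IC,
`(2t/√(1−z²))·arcsin(√(1−z²)) + 2zt`, is at most `π`, with equality exactly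
for the maximally coherent pure states (`z = 0`, `t = 1`); hence
`V_a^{sup} = π`. -/
theorem qubit_accessible_volume_sup (t z : ℝ)
    (ht : 0 ≤ t) (hz0 : 0 ≤ z) (hball : t ^ 2 + z ^ 2 ≤ 1) (hz1 : z < 1) :
    2 * t / Real.sqrt (1 - z ^ 2) * Real.arcsin (Real.sqrt (1 - z ^ 2)) +
        2 * z * t ≤ Real.pi ∧
    (2 * t / Real.sqrt (1 - z ^ 2) * Real.arcsin (Real.sqrt (1 - z ^ 2)) +
        2 * z * t = Real.pi ↔ z = 0 ∧ t = 1) :=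
  qubit_accessible_volume_sup_general t z hz0 hball
end
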